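/- Let ψ be a tempered distribution on ℝ^d whose Fourier transform is a measure, represented by the pair (ρ, u). Then ψ is a weakly almost periodic tempered distribution, i.e. ψ∗f is a weakly almost periodic function for every f ∈ 𝓢(ℝ^d). -/

import Mathlib

/- Common setting: tempered distributions on ℝ^d, translation boundedness, convolution with
Schwartz functions, smooth approximate van Hove families, autocorrelation, and almost
periodicity, following "Diffraction theory and almost periodic distributions"
(Strungaru–Terauds). -/

open MeasureTheory SchwartzMap Filter Topology Metric Complex
open scoped ComplexConjugate ENNReal Real RealInnerProductSpace ContDiff

noncomputable section

/-- Euclidean space `ℝ^d`. -/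
abbrev Ed (d : ℕ) := EuclideanSpace ℝ (Fin d)

/-- Tempered distributions on `ℝ^d`: continuous linear functionals on the Schwartz space of
complex-valued Schwartz functions. -/
abbrev TD (d : ℕ) := 𝓢(Ed d, ℂ) →L[ℂ] ℂ

theorem hasTemperateGrowth_const_sub {E : Type*} [NormedAddCommGroup E] [NormedSpace ℝ E]
    (t : E) : Function.HasTemperateGrowth (fun s : E => t - s) := by
  refine Function.HasTemperateGrowth.of_fderiv (k := 1) (C := ‖t‖ + 1) ?_ ?_ ?_
  · have h : (fderiv ℝ (fun s : E => t - s)) = fun _ : E => -(ContinuousLinearMap.id ℝ E) := by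
      funext x
      rw [show (fun s : E => t - s) = (fun s : E => t - id s) from rfl]
      rw [fderiv_const_sub, fderiv_id]
    rw [h]
    exact Function.HasTemperateGrowth.const _
  · exact (differentiable_const t).sub differentiable_id
  · intro x
    calc ‖t - x‖ ≤ ‖t‖ + ‖x‖ := norm_sub_le _ _
    _ ≤ (‖t‖ + 1) * (1 + ‖x‖) ^ 1 := by nlinarith [norm_nonneg x, norm_nonneg (t : E)]

theorem isometry_const_sub {E : Type*} [NormedAddCommGroup E] [NormedSpace ℝ E] (t : E) :
    Isometry (fun s : E => t - s) :=
  Isometry.of_dist_eq fun a b => by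
    simp only [dist_eq_norm, sub_sub_sub_cancel_left, norm_sub_rev]

/-- For `t ∈ ℝ^d`, the map `f ↦ T_t f⁻ = (s ↦ f (t - s))` on Schwartz space, where `f⁻` is the
reflection `f⁻(s) = f (-s)` and `T_t` is translation by `t`. -/
def reflTranslate {d : ℕ} (t : Ed d) : 𝓢(Ed d, ℂ) →L[ℂ] 𝓢(Ed d, ℂ) :=
  SchwartzMap.compCLMOfAntilipschitz ℂ (hasTemperateGrowth_const_sub t)
    (isometry_const_sub t).antilipschitz

/-- The convolution `ψ∗f` of a tempered distribution `ψ` with a Schwartz function `f`: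
`(ψ∗f)(t) = ψ(T_t f⁻)`. -/
def convD {d : ℕ} (ψ : TD d) (f : 𝓢(Ed d, ℂ)) : Ed d → ℂ := fun t => ψ (reflTranslate t f)

/-- A tempered distribution `ψ` is translation bounded on `𝓢` if `ψ∗f` is a bounded function
for every Schwartz function `f`. -/
def IsTranslationBoundedTD {d : ℕ} (ψ : TD d) : Prop :=
  ∀ f : 𝓢(Ed d, ℂ), ∃ C : ℝ, ∀ t : Ed d, ‖convD ψ f t‖ ≤ C

/-- The coordinate directions, with multiplicities, of a multi-index `β`. -/
def dirs {d : ℕ} (β : Fin d → ℕ) : List (Fin d) :=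
  (List.finRange d).flatMap fun i => List.replicate (β i) i

/-- The multi-index partial derivative `D^β` on Schwartz space, as the composition of the
directional derivative operators along the coordinate directions of `β`. -/
def mpderivOp {d : ℕ} (β : Fin d → ℕ) : 𝓢(Ed d, ℂ) →L[ℂ] 𝓢(Ed d, ℂ) :=
  (dirs β).foldr
    (fun i T => (LineDeriv.lineDerivOpCLM ℂ 𝓢(Ed d, ℂ) (EuclideanSpace.single i (1 : ℝ))).comp T)
    (ContinuousLinearMap.id ℂ _)

/-- The norm `‖f‖_{M,N} := sup_{|α| ≤ M, |β| ≤ N} sup_x |x^α (D^β f)(x)|` on Schwartz space. -/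
def normMN (d M N : ℕ) (f : 𝓢(Ed d, ℂ)) : ℝ :=
  ⨆ p : {p : (Fin d → ℕ) × (Fin d → ℕ) // (∑ i, p.1 i) ≤ M ∧ (∑ i, p.2 i) ≤ N},
    ⨆ x : Ed d, ‖(∏ i, x i ^ p.1.1 i) • mpderivOp p.1.2 f x‖

/-- The distributional derivative `D^α ψ`, given by `(D^α ψ)(f) = (−1)^{|α|} ψ(D^α f)`. -/
def mderivTD {d : ℕ} (α : Fin d → ℕ) (ψ : TD d) : TD d :=
  ((-1 : ℂ) ^ (∑ i, α i)) • (ψ.comp (mpderivOp α))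

open Classical in
/-- The Schwartz representative of a function `F : ℝ^d → ℂ`, when one exists (and `0`
otherwise); representatives are unique since the coercion `𝓢(ℝ^d, ℂ) → (ℝ^d → ℂ)` is
injective. -/
def toS (d : ℕ) (F : Ed d → ℂ) : 𝓢(Ed d, ℂ) :=
  if h : ∃ G : 𝓢(Ed d, ℂ), ⇑G = F then h.choose else 0

/-- A tempered distribution `φ` has compact support if there is a compact set `K` such that
`φ(f) = 0` for every Schwartz function `f` vanishing on a neighbourhood of `K`. -/
def HasCompactSupportTD {d : ℕ} (φ : TD d) : Prop :=
  ∃ K : Set (Ed d), IsCompact K ∧ ∀ f : 𝓢(Ed d, ℂ),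
    (∃ U : Set (Ed d), IsOpen U ∧ K ⊆ U ∧ ∀ x ∈ U, f x = 0) → φ f = 0

/-- A positive measure `ρ` on `ℝ^d` is translation bounded if
`sup_x ρ(x + K) < ∞` for every compact `K`. -/
def IsTranslationBoundedMeasure {d : ℕ} (ρ : Measure (Ed d)) : Prop :=
  ∀ K : Set (Ed d), IsCompact K →
    ∃ C : ℝ≥0∞, C ≠ ⊤ ∧ ∀ x : Ed d, ρ ((fun y => x + y) '' K) ≤ C

/-- A smooth approximate van Hove family: for each `R ≥ 1`, `h_R` is smooth and compactly
supported, with `1_{B_R} ≤ h_R ≤ 1` and `h_R = 0` outside the closed ball of radius `R + 1`. -/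
def IsSmoothVanHove (d : ℕ) (h : ℝ → Ed d → ℝ) : Prop :=
  ∀ R : ℝ, 1 ≤ R →
    ContDiff ℝ ∞ (h R) ∧ HasCompactSupport (h R) ∧
    (∀ x, 0 ≤ h R x ∧ h R x ≤ 1) ∧
    (∀ x ∈ ball (0 : Ed d) R, h R x = 1) ∧
    (∀ x ∉ closedBall (0 : Ed d) (R + 1), h R x = 0)

/-- The cutoff distribution `hψ : f ↦ ψ(h·f)` for a multiplier `h`. -/
def cutoffFn {d : ℕ} (h : Ed d → ℝ) (ψ : TD d) : 𝓢(Ed d, ℂ) → ℂ :=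
  fun f => ψ (toS d fun x => (h x : ℂ) * f x)

/-- For a distribution `θ`, the distribution `θ̃` defined by `θ̃(f) = conj (θ(f̃))`, where
`f̃(x) = conj (f (-x))`. -/
def tildeFn {d : ℕ} (θ : 𝓢(Ed d, ℂ) → ℂ) : 𝓢(Ed d, ℂ) → ℂ :=
  fun f => conj (θ (toS d fun x => conj (f (-x))))

/-- For a distribution `η`, the distribution `η⁻` defined by `η⁻(g) = η(g⁻)`, where
`g⁻(x) = g (-x)`. -/
def reflFn {d : ℕ} (η : 𝓢(Ed d, ℂ) → ℂ) : 𝓢(Ed d, ℂ) → ℂ :=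
  fun g => η (toS d fun x => g (-x))

/-- The convolution `θ∗η` of a distribution `θ` with a (compactly supported) distribution `η`,
applied to a test function `f`: `(θ∗η)(f) = θ(η⁻∗f)`, where `η⁻∗f` is the Schwartz function
`t ↦ η⁻(T_t f⁻)`. -/
def convDistApp {d : ℕ} (θ η : 𝓢(Ed d, ℂ) → ℂ) (f : 𝓢(Ed d, ℂ)) : ℂ :=
  θ (toS d fun t => reflFn η (reflTranslate t f))

/-- The autocorrelation approximant `(1/vol(B_R)) · (h_Rψ)∗(h_Rψ)~` applied to a test
function `f`. -/
def acApprox {d : ℕ} (h : ℝ → Ed d → ℝ) (ψ : TD d) (R : ℝ) (f : 𝓢(Ed d, ℂ)) : ℂ :=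
  ((volume (ball (0 : Ed d) R)).toReal)⁻¹ •
    convDistApp (cutoffFn (h R) ψ) (tildeFn (cutoffFn (h R) ψ)) f

/-- `φ` is an autocorrelation of `ψ`: for some smooth approximate van Hove family `(h_R)` and
some sequence of radii `R_n → ∞`,
`(1/vol(B_{R_n})) (h_{R_n}ψ)∗(h_{R_n}ψ)~ → φ` in the weak-∗ topology (pointwise on `𝓢`). -/
def IsAutocorrelationOf {d : ℕ} (φ ψ : TD d) : Prop :=
  ∃ h : ℝ → Ed d → ℝ, IsSmoothVanHove d h ∧
    ∃ R : ℕ → ℝ, (∀ n, 1 ≤ R n) ∧ Tendsto R atTop atTop ∧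
      ∀ f : 𝓢(Ed d, ℂ), Tendsto (fun n => acApprox h ψ (R n) f) atTop (𝓝 (φ f))

/-- A function `g : ℝ^d → ℂ` is weakly almost periodic: `g` is bounded continuous and
uniformly continuous, and its set of translates is relatively compact in the weak topology of
the Banach space `C_b(ℝ^d)`. -/
def IsWAPFun (d : ℕ) (g : Ed d → ℂ) : Prop :=
  UniformContinuous g ∧
  ∃ G : BoundedContinuousFunction (Ed d) ℂ, ⇑G = g ∧
    ∃ Y : Set (WeakSpace ℂ (BoundedContinuousFunction (Ed d) ℂ)), IsCompact Y ∧
      ∀ t : Ed d,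
        toWeakSpace ℂ _ (G.compContinuous ⟨fun s => s - t, by continuity⟩) ∈ Y

/-- A function `g : ℝ^d → ℂ` in `C_b` is strongly almost periodic: its set of translates is
relatively compact in the norm topology of `C_b(ℝ^d)`. -/
def IsSAPFun (d : ℕ) (g : Ed d → ℂ) : Prop :=
  ∃ G : BoundedContinuousFunction (Ed d) ℂ, ⇑G = g ∧
    ∃ Y : Set (BoundedContinuousFunction (Ed d) ℂ), IsCompact Y ∧
      ∀ t : Ed d, G.compContinuous ⟨fun s => s - t, by continuity⟩ ∈ Y

/-- A function `g : ℝ^d → ℂ` is null weakly almost periodic: it is weakly almost periodic and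
`(1/vol(B_R)) ∫_{B_R} |g| → 0` as `R → ∞`. -/
def IsWAP0Fun (d : ℕ) (g : Ed d → ℂ) : Prop :=
  IsWAPFun d g ∧
    Tendsto (fun R : ℝ => ((volume (ball (0 : Ed d) R)).toReal)⁻¹ *
      ∫ t in ball (0 : Ed d) R, ‖g t‖) atTop (𝓝 0)

/-- A tempered distribution `ψ` is positive definite if `ψ(f∗f̃)` is real and nonnegative for
every Schwartz function `f`, where `(f∗f̃)(x) = ∫ f(x-y) conj (f(-y)) dy`. -/
def IsPositiveDefiniteTD {d : ℕ} (ψ : TD d) : Prop :=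
  ∀ f : 𝓢(Ed d, ℂ),
    0 ≤ (ψ (toS d fun x => ∫ y, f (x - y) * conj (f (-y)))).re ∧
    (ψ (toS d fun x => ∫ y, f (x - y) * conj (f (-y)))).im = 0

/-- The distribution `χ̄_xψ : g ↦ ψ(χ̄_x·g)`, where `χ_x(y) = e^{2πi x·y}`. -/
def charMulFn {d : ℕ} (x : Ed d) (ψ : TD d) : 𝓢(Ed d, ℂ) → ℂ :=
  fun g => ψ (toS d fun y => Complex.exp (-(2 * (π : ℝ) * Complex.I * (⟪x, y⟫ : ℝ))) * g y)

/-!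
By Fourier inversion, `(ψ∗f)(t) = ∫ 𝐞 ⟪ξ, t⟫ • w ξ ∂ρ` with `w = 𝓕 f · u ∈ L¹(ρ)`: the function
`ψ∗f` is the inverse Fourier–Stieltjes transform of the finite complex measure `w ρ`. Factor
`w = b · a` with `a, b ∈ L²(ρ)`. Then `Φ x := (s ↦ ∫ 𝐞 ⟪ξ, s⟫ • b ξ x ξ ∂ρ)` is a bounded linear
map `L²(ρ) → C_b`, `ψ∗f = Φ a`, and translating `Φ a` by `t` is the same as modulating `a` by
`𝐞 ⟪·, -t⟫`. The modulations of `a` lie in a closed ball of the Hilbert space `L²(ρ)`, which is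
weakly compact, and `Φ` is continuous for the weak topologies, so the translates of `ψ∗f` lie in
a weakly compact subset of `C_b`. Uniform continuity comes from dominated convergence.
-/

open scoped FourierTransform InnerProductSpace BoundedContinuousFunction

theorem InnerProductSpace.isCompact_toWeakSpace_closedBall {𝕜 H : Type*} [RCLike 𝕜]
    [NormedAddCommGroup H] [InnerProductSpace 𝕜 H] [CompleteSpace H] (r : ℝ) :
    IsCompact (toWeakSpace 𝕜 H '' closedBall 0 r) := by
  let R := InnerProductSpace.toDual 𝕜 H
  let Θ : WeakDual 𝕜 H → WeakSpace 𝕜 H :=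
    fun x' => toWeakSpace 𝕜 H (R.symm (WeakDual.toStrongDual x'))
  -- `R` is conjugate-linear, so each weak functional of `Θ x'` is the conjugate of an evaluation
  have hΘ : Continuous Θ := by
    refine WeakBilin.continuous_of_continuous_eval _ fun F => ?_
    have hF : ∀ x' : WeakDual 𝕜 H,
        (topDualPairing 𝕜 H).flip (Θ x') F = starRingEnd 𝕜 (x' (R.symm F)) := fun x' => by
      change F (R.symm (WeakDual.toStrongDual x')) = _
      rw [← InnerProductSpace.toDual_symm_apply, ← inner_conj_symm,
        InnerProductSpace.toDual_symm_apply]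
      rfl
    simp only [hF]
    exact continuous_star.comp (WeakDual.eval_continuous _)
  convert (WeakDual.isCompact_closedBall (𝕜 := 𝕜) (E := H) 0 r).image hΘ using 1
  ext y
  constructor
  · rintro ⟨x, hx, rfl⟩
    refine ⟨StrongDual.toWeakDual (R x), ?_, ?_⟩
    · simpa [R] using hx
    · simp [Θ]
  · rintro ⟨x', hx', rfl⟩
    exact ⟨_, by simpa [R] using hx', rfl⟩

section FourierStieltjes

variable {V : Type*} [NormedAddCommGroup V] [InnerProductSpace ℝ V]

lemma continuous_fourierChar_inner_left (t : V) : Continuous fun ξ : V => 𝐞 ⟪ξ, t⟫ :=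
  Real.continuous_fourierChar.comp (continuous_id.inner continuous_const)

lemma continuous_fourierChar_inner_right (ξ : V) : Continuous fun t : V => 𝐞 ⟪ξ, t⟫ :=
  Real.continuous_fourierChar.comp (continuous_const.inner continuous_id)

lemma norm_fourierChar_sub_fourierChar (a b : ℝ) :
    ‖(𝐞 a : ℂ) - 𝐞 b‖ = ‖(𝐞 (a - b) : ℂ) - 1‖ := by
  have h : (𝐞 a : ℂ) - 𝐞 b = ((𝐞 (a - b) : ℂ) - 1) * 𝐞 b := by
    rw [sub_mul, one_mul, ← Circle.coe_mul, ← AddChar.map_add_eq_mul, sub_add_cancel]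
  rw [h, norm_mul, Circle.norm_coe, mul_one]

variable [MeasurableSpace V] {ρ : Measure V} {w : V → ℂ}

def fourierStieltjes (ρ : Measure V) (w : V → ℂ) (t : V) : ℂ := ∫ ξ, 𝐞 ⟪ξ, t⟫ • w ξ ∂ρ

lemma fourierStieltjes_congr_ae {w' : V → ℂ} (h : w =ᵐ[ρ] w') :
    fourierStieltjes ρ w = fourierStieltjes ρ w' :=
  funext fun t => integral_congr_ae (h.mono fun ξ hξ => by simp only [hξ])

lemma fourierStieltjes_fourierChar_smul (t s : V) :
    fourierStieltjes ρ (fun ξ => 𝐞 ⟪ξ, t⟫ • w ξ) s = fourierStieltjes ρ w (s + t) := by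
  simp only [fourierStieltjes, smul_smul, inner_add_right, AddChar.map_add_eq_mul, mul_comm]

lemma eLpNorm_fourierChar_smul {p : ℝ≥0∞} (f : V → ℂ) (t : V) :
    eLpNorm (fun ξ => 𝐞 ⟪ξ, t⟫ • f ξ) p ρ = eLpNorm f p ρ :=
  eLpNorm_congr_norm_ae (ae_of_all _ fun _ => Circle.norm_smul _ _)

variable [OpensMeasurableSpace V]

lemma MeasureTheory.MemLp.fourierChar_smul {p : ℝ≥0∞} {f : V → ℂ} (hf : MemLp f p ρ) (t : V) :
    MemLp (fun ξ => 𝐞 ⟪ξ, t⟫ • f ξ) p ρ :=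
  hf.congr_norm ((continuous_fourierChar_inner_left t).aestronglyMeasurable.smul hf.1)
    (ae_of_all _ fun _ => (Circle.norm_smul _ _).symm)

lemma MeasureTheory.Integrable.fourierChar_smul (hw : Integrable w ρ) (t : V) :
    Integrable (fun ξ => 𝐞 ⟪ξ, t⟫ • w ξ) ρ :=
  memLp_one_iff_integrable.1 ((memLp_one_iff_integrable.2 hw).fourierChar_smul t)

lemma dist_fourierStieltjes_le (hw : Integrable w ρ) (s s' : V) :
    dist (fourierStieltjes ρ w s) (fourierStieltjes ρ w s') ≤
      ∫ ξ, ‖(𝐞 ⟪ξ, s - s'⟫ : ℂ) - 1‖ * ‖w ξ‖ ∂ρ := by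
  rw [dist_eq_norm, fourierStieltjes, fourierStieltjes,
    ← integral_sub (hw.fourierChar_smul s) (hw.fourierChar_smul s')]
  refine (norm_integral_le_integral_norm _).trans (le_of_eq (integral_congr_ae
    (ae_of_all _ fun ξ => ?_)))
  simp only [Circle.smul_def, smul_eq_mul, ← sub_mul, norm_mul, inner_sub_right,
    norm_fourierChar_sub_fourierChar]

theorem uniformContinuous_fourierStieltjes (hw : Integrable w ρ) :
    UniformContinuous (fourierStieltjes ρ w) := by
  set φ : V → ℝ := fun h => ∫ ξ, ‖(𝐞 ⟪ξ, h⟫ : ℂ) - 1‖ * ‖w ξ‖ ∂ρ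
  have hφ : Continuous φ := by
    refine continuous_of_dominated (bound := fun ξ => 2 * ‖w ξ‖) (fun h => ?_) (fun h => ?_)
      (hw.norm.const_mul 2) (ae_of_all _ fun ξ => ?_)
    · exact ((continuous_fourierChar_inner_left h).subtype_val.sub continuous_const).norm
        |>.aestronglyMeasurable.mul hw.norm.1
    · refine ae_of_all _ fun ξ => ?_
      rw [norm_mul, norm_norm, norm_norm]
      gcongr
      exact (norm_sub_le _ _).trans (by rw [Circle.norm_coe]; norm_num)
    · exact (((continuous_fourierChar_inner_right ξ).subtype_val.sub continuous_const).norm).mul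
        continuous_const
  have hφ0 : φ 0 = 0 := by simp [φ]
  rw [Metric.uniformContinuous_iff]
  intro ε hε
  obtain ⟨δ, hδ, hφδ⟩ := Metric.continuous_iff.1 hφ 0 ε hε
  refine ⟨δ, hδ, fun {s s'} hss' => (dist_fourierStieltjes_le hw s s').trans_lt ?_⟩
  have hlt := hφδ (s - s') (by rwa [dist_zero_right, ← dist_eq_norm])
  rw [hφ0, dist_zero_right, Real.norm_eq_abs] at hlt
  exact (le_abs_self _).trans_lt hlt

end FourierStieltjes

theorem MeasureTheory.Integrable.exists_memLp_two_mul_eq {α 𝕜 : Type*} [MeasurableSpace α]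
    [RCLike 𝕜] {μ : Measure α} {w : α → 𝕜} (hw : Integrable w μ) :
    ∃ a b : α → 𝕜, MemLp a 2 μ ∧ MemLp b 2 μ ∧ a * b = w := by
  set b : α → 𝕜 := fun x => (√‖w x‖ : 𝕜)
  set a : α → 𝕜 := fun x => w x / b x
  have hb_meas : AEStronglyMeasurable b μ :=
    (RCLike.continuous_ofReal.comp Real.continuous_sqrt).comp_aestronglyMeasurable hw.1.norm
  have hnorm_b : ∀ x, ‖b x‖ ^ 2 = ‖w x‖ := fun x => by
    simp [b, Real.sq_sqrt (norm_nonneg (w x))]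
  -- `0 / 0 = 0` makes the quotient correct also where `w` vanishes
  have hnorm_a : ∀ x, ‖a x‖ ^ 2 = ‖w x‖ := fun x => by
    rcases eq_or_ne (w x) 0 with h | h
    · simp [a, h]
    · rw [norm_div, div_pow, hnorm_b, sq, mul_div_assoc, div_self (norm_ne_zero_iff.2 h), mul_one]
  have hab : a * b = w := funext fun x => by
    rcases eq_or_ne (w x) 0 with h | h
    · simp [a, h]
    · exact div_mul_cancel₀ _ (by simpa [b] using h)
  have ha_meas : AEStronglyMeasurable a μ := by
    have h : a = fun x => ((√‖w x‖)⁻¹ : ℝ) • w x := funext fun x => by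
      simp [a, b, div_eq_inv_mul, RCLike.real_smul_eq_coe_mul]
    rw [h]
    exact hw.1.norm.aemeasurable.sqrt.inv.aestronglyMeasurable.smul hw.1
  refine ⟨a, b, ?_, ?_, hab⟩
  · exact (memLp_two_iff_integrable_sq_norm ha_meas).2
      (hw.norm.congr (ae_of_all _ fun x => (hnorm_a x).symm))
  · exact (memLp_two_iff_integrable_sq_norm hb_meas).2
      (hw.norm.congr (ae_of_all _ fun x => (hnorm_b x).symm))

lemma MeasureTheory.Lp.integrable_mul {α 𝕜 : Type*} [MeasurableSpace α] [RCLike 𝕜]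
    {μ : Measure α} (f g : Lp 𝕜 2 μ) : Integrable (⇑f * ⇑g) μ :=
  (Lp.memLp f).integrable_mul (Lp.memLp g)

section FourierStieltjesL2

variable {V : Type*} [NormedAddCommGroup V] [InnerProductSpace ℝ V] [MeasurableSpace V]
  [OpensMeasurableSpace V] {ρ : Measure V}

def fourierStieltjesKernel (b : Lp ℂ 2 ρ) (s : V) : Lp ℂ 2 ρ :=
  ((Lp.memLp b).star.fourierChar_smul (-s)).toLp _

lemma norm_fourierStieltjesKernel (b : Lp ℂ 2 ρ) (s : V) :
    ‖fourierStieltjesKernel b s‖ = ‖b‖ := by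
  rw [fourierStieltjesKernel, Lp.norm_toLp, eLpNorm_fourierChar_smul, Lp.norm_def,
    eLpNorm_star]

lemma inner_fourierStieltjesKernel (b x : Lp ℂ 2 ρ) (s : V) :
    ⟪fourierStieltjesKernel b s, x⟫_ℂ = fourierStieltjes ρ (⇑b * ⇑x) s := by
  rw [L2.inner_def, fourierStieltjes]
  refine integral_congr_ae ?_
  filter_upwards [MemLp.coeFn_toLp ((Lp.memLp b).star.fourierChar_smul (-s))] with ξ hξ
  rw [fourierStieltjesKernel, hξ]
  simp [Circle.smul_def, inner_neg_right, ← Circle.coe_inv_eq_conj, AddChar.map_neg_eq_inv]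
  ring

lemma norm_fourierStieltjes_mul_le (b x : Lp ℂ 2 ρ) (s : V) :
    ‖fourierStieltjes ρ (⇑b * ⇑x) s‖ ≤ ‖b‖ * ‖x‖ := by
  rw [← inner_fourierStieltjesKernel, ← norm_fourierStieltjesKernel b s]
  exact norm_inner_le_norm _ _

def fourierStieltjesL2 (b : Lp ℂ 2 ρ) : Lp ℂ 2 ρ →L[ℂ] V →ᵇ ℂ :=
  LinearMap.mkContinuous
    { toFun := fun x => BoundedContinuousFunction.ofNormedAddCommGroup
        (fourierStieltjes ρ (⇑b * ⇑x))
        (uniformContinuous_fourierStieltjes (Lp.integrable_mul b x)).continuous (‖b‖ * ‖x‖)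
        (norm_fourierStieltjes_mul_le b x)
      map_add' := fun x y => by
        ext s
        simp only [BoundedContinuousFunction.coe_add, Pi.add_apply,
          BoundedContinuousFunction.coe_ofNormedAddCommGroup, ← inner_fourierStieltjesKernel,
          inner_add_right]
      map_smul' := fun c x => by
        ext s
        simp only [BoundedContinuousFunction.coe_smul, RingHom.id_apply, smul_eq_mul,
          BoundedContinuousFunction.coe_ofNormedAddCommGroup, ← inner_fourierStieltjesKernel,
          inner_smul_right] }
    ‖b‖ fun x => BoundedContinuousFunction.norm_ofNormedAddCommGroup_le _ (by positivity)
      (norm_fourierStieltjes_mul_le b x)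

lemma coe_fourierStieltjesL2 (b x : Lp ℂ 2 ρ) :
    ⇑(fourierStieltjesL2 b x) = fourierStieltjes ρ (⇑b * ⇑x) :=
  rfl

end FourierStieltjesL2

theorem isWAPFun_fourierStieltjes_mul {d : ℕ} {ρ : Measure (Ed d)} (a b : Lp ℂ 2 ρ) :
    IsWAPFun d (fourierStieltjes ρ (⇑b * ⇑a)) := by
  let Φ := fourierStieltjesL2 b
  have hmod : ∀ t, MemLp (fun ξ => 𝐞 ⟪ξ, -t⟫ • a ξ) 2 ρ :=
    fun t => (Lp.memLp a).fourierChar_smul (-t)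
  refine ⟨uniformContinuous_fourierStieltjes (Lp.integrable_mul b a), Φ a, rfl,
    WeakSpace.map Φ '' (toWeakSpace ℂ _ '' closedBall 0 ‖a‖),
    (InnerProductSpace.isCompact_toWeakSpace_closedBall _).image (WeakSpace.map Φ).continuous,
    fun t => ⟨_, ⟨(hmod t).toLp _, ?_, rfl⟩, ?_⟩⟩
  · rw [mem_closedBall_zero_iff, Lp.norm_toLp, eLpNorm_fourierChar_smul, Lp.norm_def]
  · change toWeakSpace ℂ _ (Φ ((hmod t).toLp _)) = toWeakSpace ℂ _ _
    congr 1
    ext s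
    simp only [BoundedContinuousFunction.compContinuous_apply, ContinuousMap.coe_mk, Φ,
      coe_fourierStieltjesL2, sub_eq_add_neg, ← fourierStieltjes_fourierChar_smul]
    refine congrFun (fourierStieltjes_congr_ae ?_) s
    filter_upwards [(hmod t).coeFn_toLp] with ξ hξ
    rw [Pi.mul_apply, Pi.mul_apply, hξ, mul_smul_comm]

theorem isWAPFun_fourierStieltjes {d : ℕ} {ρ : Measure (Ed d)} {w : Ed d → ℂ}
    (hw : Integrable w ρ) : IsWAPFun d (fourierStieltjes ρ w) := by
  obtain ⟨a, b, ha, hb, rfl⟩ := hw.exists_memLp_two_mul_eq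
  rw [mul_comm, fourierStieltjes_congr_ae (hb.coeFn_toLp.mul ha.coeFn_toLp).symm]
  exact isWAPFun_fourierStieltjes_mul _ _

lemma fourierInv_reflTranslate {d : ℕ} (f : 𝓢(Ed d, ℂ)) (t ξ : Ed d) :
    𝓕⁻ (reflTranslate t f) ξ = 𝐞 ⟪ξ, t⟫ • 𝓕 f ξ := by
  have h : (fun x => reflTranslate t f (-x)) = f ∘ fun x => x + t :=
    funext fun x => by simp [reflTranslate, sub_neg_eq_add, add_comm]
  rw [fourierInv_coe, Real.fourierInv_eq_fourier_comp_neg, h, fourier_coe]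
  exact congrFun (VectorFourier.fourierIntegral_comp_add_right 𝐞 volume (innerₗ _) f t) ξ
    |>.trans (by rw [innerₗ_apply_apply, real_inner_comm]; rfl)

theorem convD_eq_fourierStieltjes {d : ℕ} {ψ : TD d} {ρ : Measure (Ed d)} {u : Ed d → ℂ}
    (hFT : ∀ f : 𝓢(Ed d, ℂ), ψ (SchwartzMap.fourierTransformCLM ℂ f) = ∫ x, f x * u x ∂ρ)
    (f : 𝓢(Ed d, ℂ)) : convD ψ f = fourierStieltjes ρ fun ξ => 𝓕 f ξ * u ξ := by
  funext t
  have h := hFT (𝓕⁻ (reflTranslate t f))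
  rw [fourierTransformCLM_apply, FourierInvPair.fourier_fourierInv_eq] at h
  rw [convD, h, fourierStieltjes]
  simp only [fourierInv_reflTranslate, smul_mul_assoc]

theorem statement13_general (d : ℕ) (ψ : TD d) (ρ : Measure (Ed d))
    (hint : ∀ f : 𝓢(Ed d, ℂ), Integrable (fun x => f x) ρ)
    (u : Ed d → ℂ) (hu : Measurable u) (hu1 : ∀ᵐ x ∂ρ, ‖u x‖ = 1)
    (hFT : ∀ f : 𝓢(Ed d, ℂ),
      ψ (SchwartzMap.fourierTransformCLM ℂ f) = ∫ x, f x * u x ∂ρ) :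
    ∀ f : 𝓢(Ed d, ℂ), IsWAPFun d (convD ψ f) := by
  intro f
  have hw : Integrable (fun ξ => 𝓕 f ξ * u ξ) ρ :=
    (hint (𝓕 f)).mul_of_top_left
      (memLp_top_of_bound hu.aestronglyMeasurable 1 (hu1.mono fun _ h => h.le))
  rw [convD_eq_fourierStieltjes hFT f]
  exact isWAPFun_fourierStieltjes hw

/-- If the Fourier transform of `ψ` is a measure, represented by `(ρ, u)`, then
`ψ` is weakly almost periodic: `ψ∗f` is a weakly almost periodic function for every Schwartz
function `f`. -/
theorem statement13 (d : ℕ) (ψ : TD d) (ρ : Measure (Ed d)) [ρ.Regular]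
    (hint : ∀ f : 𝓢(Ed d, ℂ), Integrable (fun x => f x) ρ)
    (u : Ed d → ℂ) (hu : Measurable u) (hu1 : ∀ᵐ x ∂ρ, ‖u x‖ = 1)
    (hFT : ∀ f : 𝓢(Ed d, ℂ),
      ψ (SchwartzMap.fourierTransformCLM ℂ f) = ∫ x, f x * u x ∂ρ) :
    ∀ f : 𝓢(Ed d, ℂ), IsWAPFun d (convD ψ f) :=
  statement13_general d ψ ρ hint u hu hu1 hFT

end
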